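/- Let k be a field of characteristic p > 0 and let u₀ be a rational function on the projective line ℙ¹ over k whose divisor is div(u₀) = m₁·P₁ + m₂·P₂ + p·Q' for distinct closed points P₁, P₂, some divisor Q' supported away from a given point P', and integers m₁, m₂ not divisible by p. Then the differential du₀ is nonzero, and du₀ does not vanish at P'. -/

import Mathlib

open Polynomial

/-- The order of vanishing of a nonzero rational function at a finite point
`a` of the affine line: multiplicity of `a` as a root of the numerator minus
that as a root of the denominator. -/
noncomputable def RatFunc.ordAt {k : Type*} [Field k] (a : k) (u : RatFunc k) : ℤ :=
  (u.num.rootMultiplicity a : ℤ) - (u.denom.rootMultiplicity a : ℤ)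

/-- The order of vanishing of a rational function at the point at infinity
of `ℙ¹`. -/
noncomputable def RatFunc.ordAtInfty {k : Type*} [Field k] (u : RatFunc k) : ℤ :=
  (u.denom.natDegree : ℤ) - (u.num.natDegree : ℤ)

/-- The derivative of a rational function. -/
noncomputable def RatFunc.deriv {k : Type*} [Field k] (u : RatFunc k) : RatFunc k :=
  algebraMap (Polynomial k) (RatFunc k)
      (Polynomial.derivative u.num * u.denom - u.num * Polynomial.derivative u.denom) /
    algebraMap (Polynomial k) (RatFunc k) u.denom ^ 2

section Aux

variable {k : Type*} [Field k]

/-- The order at a finite point of a quotient of polynomials. -/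
lemma aux_ordAt_div (a : k) (f g : Polynomial k) (hf : f ≠ 0) (hg : g ≠ 0) :
    RatFunc.ordAt a (algebraMap (Polynomial k) (RatFunc k) f /
        algebraMap (Polynomial k) (RatFunc k) g) =
      (f.rootMultiplicity a : ℤ) - (g.rootMultiplicity a : ℤ) := by
  set q : RatFunc k := algebraMap (Polynomial k) (RatFunc k) f /
      algebraMap (Polynomial k) (RatFunc k) g with hqdef
  have hq0 : q ≠ 0 :=
    div_ne_zero (RatFunc.algebraMap_ne_zero hf) (RatFunc.algebraMap_ne_zero hg)
  have hnum : q.num ≠ 0 := RatFunc.num_ne_zero hq0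
  have hden : q.denom ≠ 0 := RatFunc.denom_ne_zero q
  have key : q.num * g = f * q.denom := by
    apply RatFunc.algebraMap_injective k
    rw [map_mul, map_mul,
      ← div_eq_div_iff (RatFunc.algebraMap_ne_zero hden) (RatFunc.algebraMap_ne_zero hg),
      RatFunc.num_div_denom]
  have h3 := Polynomial.rootMultiplicity_mul (x := a) (mul_ne_zero hnum hg)
  have h4 := Polynomial.rootMultiplicity_mul (x := a) (mul_ne_zero hf hden)
  rw [key, h4] at h3
  unfold RatFunc.ordAt
  omega

/-- root multiplicity of `(X - C x) ^ n` at a point `c ≠ x` is zero. -/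
lemma aux_rm_pow_eq_zero {x c : k} (h : c ≠ x) (n : ℕ) :
    ((X - C x) ^ n).rootMultiplicity c = 0 := by
  apply rootMultiplicity_eq_zero
  simp only [IsRoot.def, eval_pow, eval_sub, eval_X, eval_C]
  exact pow_ne_zero n (sub_ne_zero.mpr h)

/-- If all root multiplicities are divisible by the characteristic, over an
algebraically closed field the derivative vanishes. -/
lemma aux_derivative_eq_zero (p : ℕ) [CharP k p] [IsAlgClosed k]
    (f : Polynomial k) (h : ∀ a : k, p ∣ f.rootMultiplicity a) :
    derivative f = 0 := by
  classical
  rcases eq_or_ne f 0 with rfl | hf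
  · simp
  have hsplit : f.Splits := IsAlgClosed.splits f
  have hfact := Polynomial.Splits.eq_prod_roots hsplit
  rw [Polynomial.prod_multiset_root_eq_finset_root] at hfact
  rw [hfact, derivative_C_mul]
  rw [Finset.prod_eq_multiset_prod]
  rw [Polynomial.derivative_prod]
  have : ∀ b ∈ (Multiset.map
      (fun i => (Multiset.map (fun a => (X - C a) ^ rootMultiplicity a f)
        (f.roots.toFinset.val.erase i)).prod *
          derivative ((X - C i) ^ rootMultiplicity i f)) f.roots.toFinset.val), b = 0 := by
    intro b hb
    obtain ⟨i, _, rfl⟩ := Multiset.mem_map.mp hb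
    rw [derivative_X_sub_C_pow, (CharP.cast_eq_zero_iff k p _).mpr (h i)]
    simp
  rw [Multiset.sum_eq_zero this, mul_zero]

/-- Decompose a nonzero polynomial at two distinct points. -/
lemma aux_decompose (f : Polynomial k) (hf : f ≠ 0) (x y : k) (hxy : x ≠ y) :
    ∃ g : Polynomial k,
      f = (X - C x) ^ f.rootMultiplicity x * ((X - C y) ^ f.rootMultiplicity y * g) ∧
      g ≠ 0 ∧ ¬ g.IsRoot x ∧ ¬ g.IsRoot y ∧
      ∀ c : k, c ≠ x → c ≠ y → g.rootMultiplicity c = f.rootMultiplicity c := by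
  classical
  obtain ⟨g₁, hg₁, hnd₁⟩ := f.exists_eq_pow_rootMultiplicity_mul_and_not_dvd hf x
  have hg₁0 : g₁ ≠ 0 := by
    intro h; apply hf; rw [hg₁, h, mul_zero]
  have hrmy : g₁.rootMultiplicity y = f.rootMultiplicity y := by
    conv_rhs => rw [hg₁]
    rw [Polynomial.rootMultiplicity_mul (x := y)
      (by rw [← hg₁]; exact hf), aux_rm_pow_eq_zero (Ne.symm hxy), zero_add]
  obtain ⟨g, hg, hnd⟩ := g₁.exists_eq_pow_rootMultiplicity_mul_and_not_dvd hg₁0 y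
  have hg0 : g ≠ 0 := by
    intro h; apply hg₁0; rw [hg, h, mul_zero]
  refine ⟨g, ?_, hg0, ?_, ?_, ?_⟩
  · conv_lhs => rw [hg₁, hg]
    rw [hrmy]
  · intro hroot
    apply hnd₁
    rw [hg]
    exact Dvd.dvd.mul_left (Polynomial.dvd_iff_isRoot.mpr hroot) _
  · intro hroot
    exact hnd (Polynomial.dvd_iff_isRoot.mpr hroot)
  · intro c hcx hcy
    have h1 : f.rootMultiplicity c =
        ((X - C x) ^ f.rootMultiplicity x).rootMultiplicity c + g₁.rootMultiplicity c := by
      conv_lhs => rw [hg₁]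
      exact Polynomial.rootMultiplicity_mul (by rw [← hg₁]; exact hf)
    have h2 : g₁.rootMultiplicity c =
        ((X - C y) ^ g₁.rootMultiplicity y).rootMultiplicity c + g.rootMultiplicity c := by
      conv_lhs => rw [hg]
      exact Polynomial.rootMultiplicity_mul (by rw [← hg]; exact hg₁0)
    rw [h1, h2, aux_rm_pow_eq_zero hcx, aux_rm_pow_eq_zero hcy, zero_add, zero_add]

/-- Over an algebraically closed field, the sum of root multiplicities over any
finite set containing all roots is the degree. -/
lemma aux_sum_rootMult [IsAlgClosed k] [DecidableEq k] (f : Polynomial k) (s : Finset k)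
    (hs : f.roots.toFinset ⊆ s) :
    ∑ a ∈ s, f.rootMultiplicity a = f.natDegree := by
  classical
  have hcard : f.roots.card = f.natDegree :=
    Polynomial.splits_iff_card_roots.mp (IsAlgClosed.splits f)
  calc ∑ a ∈ s, f.rootMultiplicity a = ∑ a ∈ s, f.roots.count a := by
        simp [Polynomial.count_roots]
    _ = ∑ a ∈ f.roots.toFinset, f.roots.count a := by
        refine (Finset.sum_subset hs fun a _ ha => ?_).symm
        exact Multiset.count_eq_zero_of_notMem (by simpa using ha)
    _ = f.roots.card := Multiset.toFinset_sum_count_eq f.roots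
    _ = f.natDegree := hcard

/-- The key algebraic identity for the evaluated Wronskian. -/
lemma aux_wronskian_eval (A B nv dv : k) (a₁ a₂ b₁ b₂ : ℕ) :
    A * B * (((a₁ : k) * A ^ (a₁ - 1) * (B ^ a₂ * nv) + A ^ a₁ * ((a₂ : k) * B ^ (a₂ - 1) * nv)) *
          (A ^ b₁ * (B ^ b₂ * dv)) -
        A ^ a₁ * (B ^ a₂ * nv) *
          ((b₁ : k) * A ^ (b₁ - 1) * (B ^ b₂ * dv) + A ^ b₁ * ((b₂ : k) * B ^ (b₂ - 1) * dv))) =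
      (((a₁ : k) - (b₁ : k)) * B + ((a₂ : k) - (b₂ : k)) * A) *
        (A ^ (a₁ + b₁) * B ^ (a₂ + b₂) * (nv * dv)) := by
  cases a₁ <;> cases a₂ <;> cases b₁ <;> cases b₂ <;>
    · simp only [Nat.succ_sub_one, Nat.zero_sub, Nat.cast_succ, Nat.cast_zero, pow_zero,
        pow_succ, pow_add]
      push_cast
      ring

end Aux

/-- Case 2 of Lemma 3: if `u₀` is a rational function on `ℙ¹` over a field of
characteristic `p` with divisor `m₁P₁ + m₂P₂ + pQ'`, where `p ∤ m₁, m₂` and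
`Q'` is supported away from `P'` (and `P' ≠ P₁, P₂`), then `du₀ ≠ 0` and
`du₀` does not vanish at `P'`. -/
theorem index1covers_case2 (k : Type*) [Field k] [IsAlgClosed k]
    (p : ℕ) (hp : p.Prime) [CharP k p]
    (u₀ : RatFunc k) (hu : u₀ ≠ 0)
    (p₁ p₂ p' : k) (h12 : p₁ ≠ p₂) (h1 : p' ≠ p₁) (h2 : p' ≠ p₂)
    (m₁ m₂ : ℤ) (hm1 : ¬ (p : ℤ) ∣ m₁) (hm2 : ¬ (p : ℤ) ∣ m₂)
    (ho1 : u₀.ordAt p₁ = m₁) (ho2 : u₀.ordAt p₂ = m₂)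
    (hrest : ∀ a : k, a ≠ p₁ → a ≠ p₂ → (p : ℤ) ∣ u₀.ordAt a)
    (hinf : (p : ℤ) ∣ u₀.ordAtInfty)
    (hP' : u₀.ordAt p' = 0) :
    u₀.deriv ≠ 0 ∧ (u₀.deriv).ordAt p' = 0 := by
  classical
  set N := u₀.num with hNdef
  set D := u₀.denom with hDdef
  have hN0 : N ≠ 0 := RatFunc.num_ne_zero hu
  have hord : ∀ c : k, u₀.ordAt c =
      (N.rootMultiplicity c : ℤ) - (D.rootMultiplicity c : ℤ) := fun c => rfl
  have hD0 : D ≠ 0 := RatFunc.denom_ne_zero u₀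
  -- no common roots
  have hboth : ∀ c : k, N.rootMultiplicity c = 0 ∨ D.rootMultiplicity c = 0 := by
    intro c
    by_contra hcon
    push_neg at hcon
    obtain ⟨hA, hB⟩ := hcon
    have hrN : N.IsRoot c := (Polynomial.rootMultiplicity_pos hN0).mp (Nat.pos_of_ne_zero hA)
    have hrD : D.IsRoot c := (Polynomial.rootMultiplicity_pos hD0).mp (Nat.pos_of_ne_zero hB)
    obtain ⟨a, b, hab⟩ := u₀.isCoprime_num_denom
    have := congrArg (Polynomial.eval c) hab
    simp [← hNdef, ← hDdef, Polynomial.IsRoot.def.mp hrN, Polynomial.IsRoot.def.mp hrD] at this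
  -- divide multiplicities at points away from p₁, p₂
  have hdvdN : ∀ c : k, c ≠ p₁ → c ≠ p₂ → p ∣ N.rootMultiplicity c := by
    intro c hc1 hc2
    have h := hrest c hc1 hc2
    rw [hord c] at h
    rcases hboth c with h0 | h0
    · simp [h0]
    · rw [h0] at h
      simpa using (Int.natCast_dvd_natCast.mp (by simpa using h))
  have hdvdD : ∀ c : k, c ≠ p₁ → c ≠ p₂ → p ∣ D.rootMultiplicity c := by
    intro c hc1 hc2
    have h := hrest c hc1 hc2
    rw [hord c] at h
    rcases hboth c with h0 | h0
    · rw [h0] at h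
      have : (p : ℤ) ∣ (D.rootMultiplicity c : ℤ) := by
        simpa using h.neg_right
      exact_mod_cast this
    · simp [h0]
  -- multiplicities at p'
  have hP'' : (N.rootMultiplicity p' : ℤ) - (D.rootMultiplicity p' : ℤ) = 0 := by
    rw [← hord p']; exact hP'
  have hrmP'N : N.rootMultiplicity p' = 0 := by
    rcases hboth p' with h0 | h0
    · exact h0
    · omega
  have hrmP'D : D.rootMultiplicity p' = 0 := by
    omega
  have hevN : N.eval p' ≠ 0 := by
    intro h
    have := (Polynomial.rootMultiplicity_pos hN0).mpr h
    omega
  have hevD : D.eval p' ≠ 0 := by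
    intro h
    have := (Polynomial.rootMultiplicity_pos hD0).mpr h
    omega
  -- the degree relation : p ∣ m₁ + m₂
  have hm12 : (p : ℤ) ∣ m₁ + m₂ := by
    set s : Finset k := (N.roots.toFinset ∪ D.roots.toFinset) ∪ {p₁, p₂} with hsdef
    have hp1s : p₁ ∈ s := by simp [hsdef]
    have hp2s : p₂ ∈ s := by simp [hsdef]
    have hNsum : ∑ a ∈ s, N.rootMultiplicity a = N.natDegree := by
      apply aux_sum_rootMult
      intro a ha
      simp only [hsdef, Finset.mem_union]
      left; left; exact ha
    have hDsum : ∑ a ∈ s, D.rootMultiplicity a = D.natDegree := by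
      apply aux_sum_rootMult
      intro a ha
      simp only [hsdef, Finset.mem_union]
      left; right; exact ha
    have htot : ∑ a ∈ s, u₀.ordAt a = (N.natDegree : ℤ) - (D.natDegree : ℤ) := by
      calc ∑ a ∈ s, u₀.ordAt a
          = ∑ a ∈ s, ((N.rootMultiplicity a : ℤ) - (D.rootMultiplicity a : ℤ)) := by
            exact Finset.sum_congr rfl fun a _ => hord a
        _ = (N.natDegree : ℤ) - (D.natDegree : ℤ) := by
            rw [Finset.sum_sub_distrib, ← Nat.cast_sum, ← Nat.cast_sum, hNsum, hDsum]
    have hp2s' : p₂ ∈ s.erase p₁ := Finset.mem_erase.mpr ⟨Ne.symm h12, hp2s⟩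
    have hsplit1 : ∑ a ∈ s, u₀.ordAt a =
        u₀.ordAt p₁ + ∑ a ∈ s.erase p₁, u₀.ordAt a :=
      (Finset.add_sum_erase s (fun a => u₀.ordAt a) hp1s).symm
    have hsplit2 : ∑ a ∈ s.erase p₁, u₀.ordAt a =
        u₀.ordAt p₂ + ∑ a ∈ (s.erase p₁).erase p₂, u₀.ordAt a :=
      (Finset.add_sum_erase (s.erase p₁) (fun a => u₀.ordAt a) hp2s').symm
    have hrestdvd : (p : ℤ) ∣ ∑ a ∈ (s.erase p₁).erase p₂, u₀.ordAt a := by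
      apply Finset.dvd_sum
      intro a ha
      have ha2 : a ≠ p₂ := (Finset.mem_erase.mp ha).1
      have ha1 : a ≠ p₁ := (Finset.mem_erase.mp (Finset.mem_erase.mp ha).2).1
      exact hrest a ha1 ha2
    have hinf' : (p : ℤ) ∣ (N.natDegree : ℤ) - (D.natDegree : ℤ) := by
      have h' : (p : ℤ) ∣ (D.natDegree : ℤ) - (N.natDegree : ℤ) := hinf
      simpa using h'.neg_right
    have : m₁ + m₂ = ((N.natDegree : ℤ) - (D.natDegree : ℤ)) -
        ∑ a ∈ (s.erase p₁).erase p₂, u₀.ordAt a := by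
      rw [← htot, hsplit1, hsplit2, ho1, ho2]; ring
    rw [this]
    exact dvd_sub hinf' hrestdvd
  -- decompositions
  obtain ⟨n, hN, hn0, hnx, hny, hnrm⟩ := aux_decompose N hN0 p₁ p₂ h12
  obtain ⟨d, hD, hd0, hdx, hdy, hdrm⟩ := aux_decompose D hD0 p₁ p₂ h12
  set a₁ := N.rootMultiplicity p₁ with ha₁
  set a₂ := N.rootMultiplicity p₂ with ha₂
  set b₁ := D.rootMultiplicity p₁ with hb₁
  set b₂ := D.rootMultiplicity p₂ with hb₂
  have hdn : derivative n = 0 := by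
    apply aux_derivative_eq_zero p
    intro a
    by_cases hax : a = p₁
    · subst hax; rw [rootMultiplicity_eq_zero hnx]; exact dvd_zero p
    by_cases hay : a = p₂
    · subst hay; rw [rootMultiplicity_eq_zero hny]; exact dvd_zero p
    · rw [hnrm a hax hay]; exact hdvdN a hax hay
  have hdd : derivative d = 0 := by
    apply aux_derivative_eq_zero p
    intro a
    by_cases hax : a = p₁
    · subst hax; rw [rootMultiplicity_eq_zero hdx]; exact dvd_zero p
    by_cases hay : a = p₂
    · subst hay; rw [rootMultiplicity_eq_zero hdy]; exact dvd_zero p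
    · rw [hdrm a hax hay]; exact hdvdD a hax hay
  -- the Wronskian
  set W : Polynomial k := derivative N * D - N * derivative D with hWdef
  set A : k := p' - p₁ with hAdef
  set B : k := p' - p₂ with hBdef
  have hA : A ≠ 0 := sub_ne_zero.mpr h1
  have hB : B ≠ 0 := sub_ne_zero.mpr h2
  set nv : k := n.eval p' with hnvdef
  set dv : k := d.eval p' with hdvdef
  have hevN' : N.eval p' = A ^ a₁ * (B ^ a₂ * nv) := by
    rw [hN]; simp [hAdef, hBdef, hnvdef]
  have hevD' : D.eval p' = A ^ b₁ * (B ^ b₂ * dv) := by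
    rw [hD]; simp [hAdef, hBdef, hdvdef]
  have hnv : nv ≠ 0 := by
    intro h
    apply hevN
    rw [hevN', h, mul_zero, mul_zero]
  have hdv : dv ≠ 0 := by
    intro h
    apply hevD
    rw [hevD', h, mul_zero, mul_zero]
  have hevdN : (derivative N).eval p' =
      (a₁ : k) * A ^ (a₁ - 1) * (B ^ a₂ * nv) + A ^ a₁ * ((a₂ : k) * B ^ (a₂ - 1) * nv) := by
    rw [hN, derivative_mul, derivative_mul, hdn, mul_zero, add_zero,
      derivative_X_sub_C_pow, derivative_X_sub_C_pow]
    simp only [eval_add, eval_mul, eval_pow, eval_sub, eval_X, eval_C, ← hAdef, ← hBdef, ← hnvdef]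
    try ring
  have hevdD : (derivative D).eval p' =
      (b₁ : k) * A ^ (b₁ - 1) * (B ^ b₂ * dv) + A ^ b₁ * ((b₂ : k) * B ^ (b₂ - 1) * dv) := by
    rw [hD, derivative_mul, derivative_mul, hdd, mul_zero, add_zero,
      derivative_X_sub_C_pow, derivative_X_sub_C_pow]
    simp only [eval_add, eval_mul, eval_pow, eval_sub, eval_X, eval_C, ← hAdef, ← hBdef, ← hdvdef]
    try ring
  have hWeval : A * B * W.eval p' =
      (((a₁ : k) - (b₁ : k)) * B + ((a₂ : k) - (b₂ : k)) * A) *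
        (A ^ (a₁ + b₁) * B ^ (a₂ + b₂) * (nv * dv)) := by
    rw [hWdef]
    simp only [eval_sub, eval_mul]
    rw [hevdN, hevdD, hevN', hevD']
    exact aux_wronskian_eval A B nv dv a₁ a₂ b₁ b₂
  -- the cast of m₁, m₂
  have hcast1 : ((a₁ : k) - (b₁ : k)) = ((m₁ : ℤ) : k) := by
    have h : (a₁ : ℤ) - (b₁ : ℤ) = m₁ := by rw [ha₁, hb₁, ← hord p₁]; exact ho1
    rw [← h]
    push_cast
    ring
  have hcast2 : ((a₂ : k) - (b₂ : k)) = ((m₂ : ℤ) : k) := by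
    have h : (a₂ : ℤ) - (b₂ : ℤ) = m₂ := by rw [ha₂, hb₂, ← hord p₂]; exact ho2
    rw [← h]
    push_cast
    ring
  have hm1k : ((m₁ : ℤ) : k) ≠ 0 := by
    rw [Ne, CharP.intCast_eq_zero_iff k p]
    exact hm1
  have hm2neg : ((m₂ : ℤ) : k) = -((m₁ : ℤ) : k) := by
    have h0 : (((m₁ + m₂ : ℤ)) : k) = 0 := (CharP.intCast_eq_zero_iff k p _).mpr hm12
    push_cast at h0
    linear_combination h0
  have hbracket : (((a₁ : k) - (b₁ : k)) * B + ((a₂ : k) - (b₂ : k)) * A) =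
      ((m₁ : ℤ) : k) * (p₁ - p₂) := by
    rw [hcast1, hcast2, hm2neg, hAdef, hBdef]
    ring
  have hWev_ne : W.eval p' ≠ 0 := by
    intro h
    have h0 : A * B * W.eval p' = 0 := by rw [h, mul_zero]
    rw [hWeval, hbracket] at h0
    have : ((m₁ : ℤ) : k) * (p₁ - p₂) * (A ^ (a₁ + b₁) * B ^ (a₂ + b₂) * (nv * dv)) ≠ 0 := by
      apply mul_ne_zero
      · exact mul_ne_zero hm1k (sub_ne_zero.mpr h12)
      · exact mul_ne_zero (mul_ne_zero (pow_ne_zero _ hA) (pow_ne_zero _ hB))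
          (mul_ne_zero hnv hdv)
    exact this h0
  have hW0 : W ≠ 0 := by
    intro h
    apply hWev_ne
    rw [h, eval_zero]
  -- conclude
  have hderiv : u₀.deriv = algebraMap (Polynomial k) (RatFunc k) W /
      algebraMap (Polynomial k) (RatFunc k) (D ^ 2) := by
    rw [map_pow]
    rfl
  constructor
  · rw [hderiv]
    exact div_ne_zero (RatFunc.algebraMap_ne_zero hW0)
      (RatFunc.algebraMap_ne_zero (pow_ne_zero 2 hD0))
  · rw [hderiv, aux_ordAt_div p' W (D ^ 2) hW0 (pow_ne_zero 2 hD0)]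
    have h1 : W.rootMultiplicity p' = 0 := rootMultiplicity_eq_zero hWev_ne
    have h2 : (D ^ 2).rootMultiplicity p' = 0 := by
      apply rootMultiplicity_eq_zero
      simp only [IsRoot.def, eval_pow]
      exact pow_ne_zero 2 hevD
    rw [h1, h2]
    simp
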